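/- arXiv:1910.00243 — 5 statements merged into one kernel-verified Lean document; each statement's English description precedes it below -/
import Mathlib

section
/- Let (M,d) be a metric space, (E,ρ) a complete metric space, K > 0, and T : M → E a K-Lipschitz map. Let (N,D) be a complete metric space, j : M → N a map with dense range satisfying D(j(x),j(y)) = (1/K)·ρ(T(x),T(y)) for all x,y ∈ M, and T̄ : N → E a K-Lipschitz map with T = T̄ ∘ j. Suppose (J,ρ̄) is another complete metric space, i₀ : M → J is a 1-Lipschitz map whose range is dense in J, and T₀ : J → E is a K-Lipschitz map with T = T₀ ∘ i₀. Then there exists a 1-Lipschitz map i : J → N such that i ∘ i₀ = j and T̄ ∘ i = T₀. -/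
/-!
Since `T = T₀ ∘ i₀` with `T₀` `K`-Lipschitz,
`D(j x, j y) = ρ(T₀ (i₀ x), T₀ (i₀ y)) / K ≤ ρ̄(i₀ x, i₀ y)`,
so `j` descends to a `1`-Lipschitz map on the dense set `range i₀ ⊆ J`, which extends to `J`
because `N` is complete. The identity `T̄ ∘ i = T₀` holds on `range i₀` and both sides are
continuous.
-/

open Set NNReal

section LipschitzExtension

variable {α β γ : Type*} [PseudoMetricSpace β] [MetricSpace γ] [CompleteSpace γ] {K : ℝ≥0}

theorem LipschitzWith.exists_extension_of_dense {s : Set β} (hs : Dense s) {f : s → γ}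
    (hf : LipschitzWith K f) : ∃ g : β → γ, LipschitzWith K g ∧ ∀ x : s, g x = f x := by
  have hue : IsUniformInducing ((↑) : s → β) := isUniformInducing_val s
  have hd : DenseRange ((↑) : s → β) := hs.denseRange_val
  set g := (hue.isDenseInducing hd).extend f
  have hg_eq : ∀ x : s, g x = f x := uniformly_extend_of_ind hue hd hf.uniformContinuous
  have hg_cont : Continuous g :=
    (uniformContinuous_uniformly_extend hue hd hf.uniformContinuous).continuous
  refine ⟨g, .of_dist_le_mul fun x y => ?_, hg_eq⟩
  induction x, y using hd.induction_on₂ with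
  | hp => exact isClosed_le (by fun_prop) (by fun_prop)
  | h a b => simpa only [hg_eq, Subtype.dist_eq] using hf.dist_le_mul a b

theorem exists_lipschitzWith_comp_eq_of_denseRange {e : α → β} (he : DenseRange e)
    {f : α → γ} (hf : ∀ x y, dist (f x) (f y) ≤ K * dist (e x) (e y)) :
    ∃ g : β → γ, LipschitzWith K g ∧ g ∘ e = f := by
  have hf_lip : LipschitzWith K (f ∘ rangeSplitting e) := .of_dist_le_mul fun s t => by
    simpa only [Function.comp_apply, apply_rangeSplitting, Subtype.dist_eq] using
      hf (rangeSplitting e s) (rangeSplitting e t)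
  obtain ⟨g, hg_lip, hg_eq⟩ := hf_lip.exists_extension_of_dense he
  refine ⟨g, hg_lip, funext fun x => ?_⟩
  have hfx : f (rangeSplitting e ⟨e x, mem_range_self x⟩) = f x := dist_le_zero.1 <| by
    simpa only [apply_rangeSplitting, dist_self, mul_zero] using
      hf (rangeSplitting e ⟨e x, mem_range_self x⟩) x
  exact (hg_eq ⟨e x, mem_range_self x⟩).trans hfx

end LipschitzExtension

theorem maximality_of_lipschitz_factorization_general
    {M E N J : Type*} [MetricSpace E]
    [MetricSpace N] [CompleteSpace N] [MetricSpace J]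
    (K : ℝ) (hK : 0 < K) (T : M → E)
    (j : M → N)
    (hj : ∀ x y : M, dist (j x) (j y) = (1 / K) * dist (T x) (T y))
    (Tbar : N → E) (hTbar : ∀ a b : N, dist (Tbar a) (Tbar b) ≤ K * dist a b)
    (hfact : ∀ x : M, T x = Tbar (j x))
    (i₀ : M → J)
    (hi₀_dense : DenseRange i₀)
    (T₀ : J → E) (hT₀ : ∀ a b : J, dist (T₀ a) (T₀ b) ≤ K * dist a b)
    (hfact₀ : ∀ x : M, T x = T₀ (i₀ x)) :
    ∃ i : J → N,
      (∀ a b : J, dist (i a) (i b) ≤ dist a b) ∧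
      (∀ x : M, i (i₀ x) = j x) ∧
      (∀ z : J, Tbar (i z) = T₀ z) := by
  lift K to ℝ≥0 using hK.le
  have hj_le : ∀ x y, dist (j x) (j y) ≤ ((1 : ℝ≥0) : ℝ) * dist (i₀ x) (i₀ y) := by
    intro x y
    calc dist (j x) (j y) = (K : ℝ)⁻¹ * dist (T₀ (i₀ x)) (T₀ (i₀ y)) := by
          rw [hj, hfact₀, hfact₀, one_div]
      _ ≤ (K : ℝ)⁻¹ * (K * dist (i₀ x) (i₀ y)) := by gcongr; exact hT₀ _ _
      _ = ((1 : ℝ≥0) : ℝ) * dist (i₀ x) (i₀ y) := by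
          rw [NNReal.coe_one, one_mul, inv_mul_cancel_left₀ hK.ne']
  obtain ⟨i, hi_lip, hi_comp⟩ := exists_lipschitzWith_comp_eq_of_denseRange hi₀_dense hj_le
  have hTbar_i : Tbar ∘ i = T₀ :=
    hi₀_dense.equalizer
      ((LipschitzWith.of_dist_le_mul hTbar).continuous.comp hi_lip.continuous)
      (LipschitzWith.of_dist_le_mul hT₀).continuous <|
      funext fun x => show Tbar ((i ∘ i₀) x) = T₀ (i₀ x) by
        rw [hi_comp, ← hfact, hfact₀]
  exact ⟨i, fun a b => by simpa using hi_lip.dist_le_mul a b, congrFun hi_comp,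
    congrFun hTbar_i⟩

/-- Maximality of the factorization of a `K`-Lipschitz map `T : M → E`
through the completion `N` of the metric quotient of `M` by the pseudometric
`(x,y) ↦ (1/K)·dist (T x) (T y)`: any other factorization `T = T₀ ∘ i₀` through a complete
metric space `J` (with `i₀` `1`-Lipschitz of dense range and `T₀` `K`-Lipschitz) factors
further through `N` via a `1`-Lipschitz map `i : J → N` with `i ∘ i₀ = j` and `T̄ ∘ i = T₀`. -/
theorem maximality_of_lipschitz_factorization
    {M E N J : Type*} [MetricSpace M] [MetricSpace E] [CompleteSpace E]
    [MetricSpace N] [CompleteSpace N] [MetricSpace J] [CompleteSpace J]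
    (K : ℝ) (hK : 0 < K) (T : M → E)
    (hT : ∀ x y : M, dist (T x) (T y) ≤ K * dist x y)
    (j : M → N) (hj_dense : DenseRange j)
    (hj : ∀ x y : M, dist (j x) (j y) = (1 / K) * dist (T x) (T y))
    (Tbar : N → E) (hTbar : ∀ a b : N, dist (Tbar a) (Tbar b) ≤ K * dist a b)
    (hfact : ∀ x : M, T x = Tbar (j x))
    (i₀ : M → J) (hi₀ : ∀ x y : M, dist (i₀ x) (i₀ y) ≤ dist x y)
    (hi₀_dense : DenseRange i₀)
    (T₀ : J → E) (hT₀ : ∀ a b : J, dist (T₀ a) (T₀ b) ≤ K * dist a b)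
    (hfact₀ : ∀ x : M, T x = T₀ (i₀ x)) :
    ∃ i : J → N,
      (∀ a b : J, dist (i a) (i b) ≤ dist a b) ∧
      (∀ x : M, i (i₀ x) = j x) ∧
      (∀ z : J, Tbar (i z) = T₀ z) :=
  maximality_of_lipschitz_factorization_general K hK T j hj Tbar hTbar hfact i₀ hi₀_dense T₀ hT₀
    hfact₀
end

section
/- Let (Ω,Σ,μ) be a finite measure space, 1 ≤ p ≤ ∞, (M,d) a metric space, S ⊆ M a countable subset, K ≥ 0, and T : S → L^p(μ) a map that is pointwise K-Lipschitz μ-a.e., i.e., for every x,y ∈ S, |T(x) − T(y)| ≤ K·d(x,y) holds μ-almost everywhere. Then there exists a map T̂ : M → L^p(μ) such that T̂(x) = T(x) for every x ∈ S and, for every x,y ∈ M, |T̂(x) − T̂(y)| ≤ K·d(x,y) holds μ-almost everywhere. -/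
open MeasureTheory Set
open scoped ENNReal NNReal

/-!
Countably many a.e. inequalities hold simultaneously off a single null set, so for a.e. `ω` the
map `s ↦ T s ω` is `K`-Lipschitz on `S`. The McShane formula `x ↦ ⨅ s, T s ω + K * dist x s`
extends it to a `K`-Lipschitz function on `M`; as `S` is countable this infimum is measurable in
`ω`, and it differs from `T s₀` by at most `K * dist x s₀`, hence lies in `L^p` of a finite measure.
-/

section McShane

variable {M : Type*} [PseudoMetricSpace M] {S : Set M} {K : ℝ≥0} {f : S → ℝ}

noncomputable def mcShaneExtension (K : ℝ≥0) (f : S → ℝ) (x : M) : ℝ :=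
  ⨅ s : S, f s + K * dist x s

theorem bddBelow_range_add_mul_dist (hf : LipschitzWith K f) (x : M) :
    BddBelow (range fun s : S => f s + K * dist x s) := by
  rcases isEmpty_or_nonempty S with hS | ⟨⟨s₀⟩⟩
  · simp [range_eq_empty]
  refine ⟨f s₀ - K * dist x s₀, ?_⟩
  rintro _ ⟨s, rfl⟩
  have hfs : f s₀ ≤ f s + K * dist (s₀ : M) s := hf.le_add_mul s₀ s
  have hKs : K * dist (s₀ : M) s ≤ K * (dist x s₀ + dist x s) := by
    gcongr
    exact dist_triangle_left _ _ _
  linarith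

theorem mcShaneExtension_le (hf : LipschitzWith K f) (x : M) (s : S) :
    mcShaneExtension K f x ≤ f s + K * dist x s :=
  ciInf_le (bddBelow_range_add_mul_dist hf x) s

theorem mcShaneExtension_coe (hf : LipschitzWith K f) (s : S) :
    mcShaneExtension K f s = f s := by
  have : Nonempty S := ⟨s⟩
  refine le_antisymm ?_ (le_ciInf fun t => hf.le_add_mul s t)
  simpa using mcShaneExtension_le hf s s

theorem mcShaneExtension_of_isEmpty [IsEmpty S] : mcShaneExtension K f = 0 :=
  funext fun _ => Real.iInf_of_isEmpty _

theorem lipschitzWith_mcShaneExtension (hf : LipschitzWith K f) :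
    LipschitzWith K (mcShaneExtension K f) := by
  rcases isEmpty_or_nonempty S with hS | hS
  · rw [mcShaneExtension_of_isEmpty]
    exact LipschitzWith.const' 0
  refine LipschitzWith.of_le_add_mul K fun x y => ?_
  rw [← sub_le_iff_le_add]
  refine le_ciInf fun s => ?_
  rw [sub_le_iff_le_add]
  calc mcShaneExtension K f x ≤ f s + K * dist x s := mcShaneExtension_le hf x s
    _ ≤ f s + K * dist y s + K * dist x y := by
      rw [add_assoc, ← mul_add, add_comm (dist y s)]
      gcongr
      exact dist_triangle _ _ _

end McShane

section AELipschitz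

variable {Ω : Type*} [MeasurableSpace Ω] {μ : Measure Ω} {K : ℝ≥0}

theorem ae_lipschitzWith_of_forall_ae {α β : Type*} [PseudoMetricSpace α] [Countable α]
    [PseudoMetricSpace β] {F : α → Ω → β}
    (hF : ∀ a b, ∀ᵐ ω ∂μ, dist (F a ω) (F b ω) ≤ K * dist a b) :
    ∀ᵐ ω ∂μ, LipschitzWith K fun a => F a ω := by
  filter_upwards [ae_all_iff.2 fun a => ae_all_iff.2 (hF a)] with ω hω
  exact LipschitzWith.of_dist_le_mul hω

variable {M : Type*} [PseudoMetricSpace M] {S : Set M} [Countable S] {F : S → Ω → ℝ}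

theorem measurable_mcShaneExtension (hF : ∀ s, Measurable (F s)) (x : M) :
    Measurable fun ω => mcShaneExtension K (fun s => F s ω) x :=
  Measurable.iInf fun s => (hF s).add_const _

theorem memLp_mcShaneExtension [IsFiniteMeasure μ] {p : ℝ≥0∞} (hF : ∀ s, Measurable (F s))
    (hFp : ∀ s, MemLp (F s) p μ) (hL : ∀ᵐ ω ∂μ, LipschitzWith K fun s => F s ω) (x : M) :
    MemLp (fun ω => mcShaneExtension K (fun s => F s ω) x) p μ := by
  rcases isEmpty_or_nonempty S with hS | ⟨⟨s₀⟩⟩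
  · simpa only [mcShaneExtension_of_isEmpty, Pi.zero_apply] using MemLp.zero'
  have hdiff : MemLp (fun ω => mcShaneExtension K (fun s => F s ω) x - F s₀ ω) p μ := by
    refine MemLp.of_bound ((measurable_mcShaneExtension hF x).sub (hF s₀)).aestronglyMeasurable
      (K * dist x s₀) ?_
    filter_upwards [hL] with ω hω
    rw [Real.norm_eq_abs, ← Real.dist_eq, ← mcShaneExtension_coe hω s₀]
    exact (lipschitzWith_mcShaneExtension hω).dist_le_mul x s₀
  convert hdiff.add (hFp s₀) using 1
  ext ω
  simp

end AELipschitz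

theorem ae_pointwise_lipschitz_extension_Lp_general
    {Ω : Type*} [MeasurableSpace Ω] (μ : Measure Ω) [IsFiniteMeasure μ]
    (p : ℝ≥0∞)
    {M : Type*} [MetricSpace M] (S : Set M) (hS : S.Countable)
    (K : ℝ) (hK : 0 ≤ K) (T : S → Lp ℝ p μ)
    (hT : ∀ x y : S, ∀ᵐ ω ∂μ, |T x ω - T y ω| ≤ K * dist (x : M) (y : M)) :
    ∃ That : M → Lp ℝ p μ,
      (∀ x : S, That x = T x) ∧
      (∀ x y : M, ∀ᵐ ω ∂μ, |That x ω - That y ω| ≤ K * dist x y) := by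
  have : Countable S := hS.to_subtype
  have hL : ∀ᵐ ω ∂μ, LipschitzWith K.toNNReal fun s => T s ω :=
    ae_lipschitzWith_of_forall_ae fun s t => by
      simpa only [Real.dist_eq, Subtype.dist_eq, Real.coe_toNNReal K hK] using hT s t
  have hmem := memLp_mcShaneExtension (fun s => (Lp.stronglyMeasurable (T s)).measurable)
    (fun s => Lp.memLp (T s)) hL
  refine ⟨fun x => (hmem x).toLp, fun s => Lp.ext ?_, fun x y => ?_⟩
  · filter_upwards [(hmem s).coeFn_toLp, hL] with ω hs hω
    rw [hs, mcShaneExtension_coe hω]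
  · filter_upwards [(hmem x).coeFn_toLp, (hmem y).coeFn_toLp, hL] with ω hx hy hω
    rw [hx, hy]
    simpa only [Real.dist_eq, Real.coe_toNNReal K hK] using
      (lipschitzWith_mcShaneExtension hω).dist_le_mul x y

/-- Let `μ` be a finite measure, `1 ≤ p ≤ ∞`, `(M,d)` a metric space,
`S ⊆ M` countable, `K ≥ 0`, and `T : S → L^p(μ)` pointwise `K`-Lipschitz `μ`-a.e.
Then `T` admits an extension `T̂ : M → L^p(μ)` that is pointwise `K`-Lipschitz `μ`-a.e. -/
theorem ae_pointwise_lipschitz_extension_Lp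
    {Ω : Type*} [MeasurableSpace Ω] (μ : Measure Ω) [IsFiniteMeasure μ]
    (p : ℝ≥0∞) (hp : 1 ≤ p)
    {M : Type*} [MetricSpace M] (S : Set M) (hS : S.Countable)
    (K : ℝ) (hK : 0 ≤ K) (T : S → Lp ℝ p μ)
    (hT : ∀ x y : S, ∀ᵐ ω ∂μ, |T x ω - T y ω| ≤ K * dist (x : M) (y : M)) :
    ∃ That : M → Lp ℝ p μ,
      (∀ x : S, That x = T x) ∧
      (∀ x y : M, ∀ᵐ ω ∂μ, |That x ω - That y ω| ≤ K * dist x y) :=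
  ae_pointwise_lipschitz_extension_Lp_general μ p S hS K hK T hT
end

section
/- Let (Ω,Σ,μ) be a finite measure space, (M,d) a metric space, S ⊆ M a nonempty subset, and φ : Σ → [0,∞) an increasing bounded set function (i.e., φ(B) ≤ φ(A) whenever B ⊆ A, and sup_{A∈Σ} φ(A) < ∞). Let T : S → L^1(μ) satisfy: for all x,y ∈ S and all A ∈ Σ, sup_{B∈Σ, B⊆A} |∫_B (T(x) − T(y)) dμ| ≤ φ(A)·d(x,y). Suppose that for every x ∈ M there exists a finite signed measure ν_x on Σ, absolutely continuous with respect to μ, such that ν_x(A) = sup_{y∈S} { ∫_A T(y) dμ − φ(A)·d(x,y) } for every A ∈ Σ. Then there exists a map T̂ : M → L^1(μ) such that T̂(x) = T(x) for all x ∈ S and, for all x,y ∈ M and all A ∈ Σ, sup_{B∈Σ, B⊆A} |∫_B (T̂(x) − T̂(y)) dμ| ≤ φ(A)·d(x,y). -/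
open MeasureTheory
open scoped ENNReal NNReal

/-- (Proposition `medL1`(1).) Let `μ` be a finite measure, `S ⊆ M` nonempty,
`φ` an increasing bounded nonnegative set function on measurable sets, and `T : S → L^1(μ)`
a `φ`-Lipschitz map for the semivariation norm `‖g·χ_A‖_{L^1(μ),0} = sup_{B ⊆ A} |∫_B g dμ|`.
If for every `x ∈ M` the set function `A ↦ sup_{y ∈ S} {∫_A T(y) dμ − φ(A)·d(x,y)}` is (given
by) a `μ`-continuous finite signed measure, then `T` admits a `φ`-Lipschitz extension
`T̂ : M → L^1(μ)`. -/
theorem phi_lipschitz_extension_L1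
    {Ω : Type*} [MeasurableSpace Ω] (μ : Measure Ω) [IsFiniteMeasure μ]
    {M : Type*} [MetricSpace M] (S : Set M) (hS : S.Nonempty)
    (φ : Set Ω → ℝ)
    (hφ_nonneg : ∀ A : Set Ω, MeasurableSet A → 0 ≤ φ A)
    (hφ_mono : ∀ A B : Set Ω, MeasurableSet A → MeasurableSet B → B ⊆ A → φ B ≤ φ A)
    (hφ_bdd : ∃ C : ℝ, ∀ A : Set Ω, MeasurableSet A → φ A ≤ C)
    (T : S → Lp ℝ 1 μ)
    (hT : ∀ x y : S, ∀ A : Set Ω, MeasurableSet A →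
      (⨆ B : {B : Set Ω // MeasurableSet B ∧ B ⊆ A},
        |∫ ω in (B : Set Ω), (T x ω - T y ω) ∂μ|) ≤ φ A * dist (x : M) (y : M))
    (hν : ∀ x : M, ∃ ν : SignedMeasure Ω,
      (∀ A : Set Ω, MeasurableSet A → μ A = 0 → ν A = 0) ∧
      (∀ A : Set Ω, MeasurableSet A →
        ν A = ⨆ y : S, (∫ ω in A, T y ω ∂μ - φ A * dist x (y : M)))) :
    ∃ That : M → Lp ℝ 1 μ,
      (∀ x : S, That x = T x) ∧
      (∀ x y : M, ∀ A : Set Ω, MeasurableSet A →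
        (⨆ B : {B : Set Ω // MeasurableSet B ∧ B ⊆ A},
          |∫ ω in (B : Set Ω), (That x ω - That y ω) ∂μ|) ≤ φ A * dist x y) := by
  classical
  haveI : Nonempty S := hS.to_subtype
  have hTint : ∀ x : S, Integrable (T x) μ := fun x => L1.integrable_coeFn (T x)
  -- per-set Lipschitz bound for T
  have key : ∀ x y : S, ∀ B : Set Ω, MeasurableSet B →
      |∫ ω in B, (T x ω - T y ω) ∂μ| ≤ φ B * dist (x : M) (y : M) := by
    intro x y B hB
    refine le_trans ?_ (hT x y B hB)
    have hbdd : BddAbove (Set.range fun B' : {B' : Set Ω // MeasurableSet B' ∧ B' ⊆ B} =>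
        |∫ ω in (B' : Set Ω), (T x ω - T y ω) ∂μ|) := by
      refine ⟨∫ ω, |T x ω - T y ω| ∂μ, ?_⟩
      rintro _ ⟨B', rfl⟩
      calc |∫ ω in (B' : Set Ω), (T x ω - T y ω) ∂μ|
          ≤ ∫ ω in (B' : Set Ω), |T x ω - T y ω| ∂μ := by
            simpa [Real.norm_eq_abs] using
              norm_integral_le_integral_norm (μ := μ.restrict B')
                (fun ω => T x ω - T y ω)
        _ ≤ ∫ ω, |T x ω - T y ω| ∂μ := by
            refine setIntegral_le_integral ((hTint x).sub (hTint y)).abs ?_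
            filter_upwards with ω using abs_nonneg _
    exact le_ciSup hbdd ⟨B, hB, subset_rfl⟩
  have keysub : ∀ x y : S, ∀ B : Set Ω, MeasurableSet B →
      ∫ ω in B, T x ω ∂μ - ∫ ω in B, T y ω ∂μ ≤ φ B * dist (x : M) (y : M) := by
    intro x y B hB
    have h1 := key x y B hB
    rw [integral_sub ((hTint x).integrableOn) ((hTint y).integrableOn)] at h1
    exact (le_abs_self _).trans h1
  choose ν hν₁ hν₂ using hν
  obtain ⟨y₀m, hy₀⟩ := hS
  set y₀ : S := ⟨y₀m, hy₀⟩
  -- boundedness of the defining sup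
  have hbddg : ∀ (x : M) (B : Set Ω), MeasurableSet B →
      BddAbove (Set.range fun y : S => ∫ ω in B, T y ω ∂μ - φ B * dist x (y : M)) := by
    intro x B hB
    refine ⟨∫ ω in B, T y₀ ω ∂μ + φ B * dist x (y₀ : M), ?_⟩
    rintro _ ⟨y, rfl⟩
    dsimp only
    have h1 := keysub y y₀ B hB
    have h2 : dist (y : M) (y₀ : M) - dist x (y : M) ≤ dist x (y₀ : M) := by
      have := dist_triangle (y : M) x (y₀ : M)
      rw [dist_comm (y : M) x] at this; linarith
    have h3 : φ B * (dist (y : M) (y₀ : M) - dist x (y : M)) ≤ φ B * dist x (y₀ : M) :=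
      mul_le_mul_of_nonneg_left h2 (hφ_nonneg B hB)
    have h4 : φ B * (dist (y : M) (y₀ : M) - dist x (y : M)) =
        φ B * dist (y : M) (y₀ : M) - φ B * dist x (y : M) := by ring
    linarith
  -- one-sided Lipschitz bound for ν
  have hν_lip : ∀ x y : M, ∀ B : Set Ω, MeasurableSet B →
      ν x B ≤ ν y B + φ B * dist x y := by
    intro x y B hB
    rw [hν₂ x B hB]
    refine ciSup_le fun z => ?_
    have h1 : ∫ ω in B, T z ω ∂μ - φ B * dist y (z : M) ≤ ν y B := by
      rw [hν₂ y B hB]; exact le_ciSup (hbddg y B hB) z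
    have h2 : dist y (z : M) ≤ dist y x + dist x (z : M) := dist_triangle _ _ _
    have h3 : φ B * dist y (z : M) ≤ φ B * (dist y x + dist x (z : M)) :=
      mul_le_mul_of_nonneg_left h2 (hφ_nonneg B hB)
    rw [dist_comm x y]
    nlinarith [hφ_nonneg B hB]
  have hν_abs : ∀ x y : M, ∀ B : Set Ω, MeasurableSet B →
      |ν x B - ν y B| ≤ φ B * dist x y := by
    intro x y B hB
    rw [abs_sub_le_iff]
    constructor
    · have := hν_lip x y B hB; linarith
    · have := hν_lip y x B hB; rw [dist_comm y x] at this; linarith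
  -- absolute continuity and Radon–Nikodym derivative
  have hac : ∀ x : M, ν x ≪ᵥ μ.toENNRealVectorMeasure := by
    intro x
    refine VectorMeasure.AbsolutelyContinuous.mk fun A hA h0 => ?_
    rw [Measure.toENNRealVectorMeasure_apply_measurable hA] at h0
    exact hν₁ x A hA h0
  set F : M → Ω → ℝ := fun x => SignedMeasure.rnDeriv (ν x) μ with hF
  have hFint : ∀ x : M, Integrable (F x) μ := fun x => SignedMeasure.integrable_rnDeriv (ν x) μ
  refine ⟨fun x => (hFint x).toL1 _, ?_, ?_⟩
  -- integral identity
  all_goals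
    have hint : ∀ x : M, ∀ A : Set Ω, MeasurableSet A →
        ∫ ω in A, F x ω ∂μ = ν x A := by
      intro x A hA
      rw [← withDensityᵥ_apply (hFint x) hA,
        SignedMeasure.withDensityᵥ_rnDeriv_eq (ν x) μ (hac x)]
  · -- extension property
    intro x
    have hval : ∀ A : Set Ω, MeasurableSet A → ν (x : M) A = ∫ ω in A, T x ω ∂μ := by
      intro A hA
      rw [hν₂ (x : M) A hA]
      refine le_antisymm (ciSup_le fun y => ?_) ?_
      · have := keysub y x A hA
        rw [dist_comm] at this
        linarith
      · have h := le_ciSup (hbddg (x : M) A hA) x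
        simpa using h
    have haeeq : F (x : M) =ᵐ[μ] T x := by
      refine Integrable.ae_eq_of_withDensityᵥ_eq (hFint (x : M)) (hTint x) ?_
      ext A hA
      rw [withDensityᵥ_apply (hFint (x : M)) hA, withDensityᵥ_apply (hTint x) hA,
        hint (x : M) A hA, hval A hA]
    exact Lp.ext (((hFint (x : M)).coeFn_toL1).trans haeeq)
  · -- Lipschitz property
    intro x y A hA
    haveI : Nonempty {B : Set Ω // MeasurableSet B ∧ B ⊆ A} :=
      ⟨⟨∅, MeasurableSet.empty, Set.empty_subset A⟩⟩
    refine ciSup_le fun B => ?_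
    obtain ⟨B, hB, hBA⟩ := B
    have hx : ∫ ω in B, (hFint x).toL1 _ ω ∂μ = ν x B := by
      rw [← hint x B hB]
      exact setIntegral_congr_ae hB (((hFint x).coeFn_toL1).mono fun ω h _ => h)
    have hy : ∫ ω in B, (hFint y).toL1 _ ω ∂μ = ν y B := by
      rw [← hint y B hB]
      exact setIntegral_congr_ae hB (((hFint y).coeFn_toL1).mono fun ω h _ => h)
    have hsub : ∫ ω in B, ((hFint x).toL1 _ ω - (hFint y).toL1 _ ω) ∂μ = ν x B - ν y B := by
      rw [integral_sub ((L1.integrable_coeFn _).integrableOn)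
        ((L1.integrable_coeFn _).integrableOn), hx, hy]
    rw [hsub]
    refine (hν_abs x y B hB).trans ?_
    exact mul_le_mul_of_nonneg_right (hφ_mono A B hA hB hBA) dist_nonneg
end

section
/- Let (Ω,Σ,μ) be a finite measure space, (M,d) a metric space, and φ : Σ → [0,∞) an increasing bounded set function. Let T : M → L^1(μ) satisfy: for all x,y ∈ M and all A ∈ Σ, sup_{B∈Σ, B⊆A} |∫_B (T(x) − T(y)) dμ| ≤ φ(A)·d(x,y). For each x ∈ M define ν̂_x(A) := sup_{y∈M} { ∫_A T(y) dμ − φ(A)·d(x,y) } for A ∈ Σ. Then for every x ∈ M and every A ∈ Σ: (i) ν̂_x(A) = ∫_A T(x) dμ, so ν̂_x is a countably additive μ-continuous measure; (ii) sup_{A∈Σ} |ν̂_x(A)| = sup_{A∈Σ} |∫_A T(x) dμ|; (iii) the total variation of ν̂_x equals ‖T(x)‖_{L^1(μ)}; and (iv) |ν̂_x(A) − ν̂_y(A)| ≤ φ(A)·d(x,y) for all x,y ∈ M. -/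
open MeasureTheory

/-
Taking `y = x` shows `ν̂_x(A) ≥ ∫_A T(x) dμ`. Conversely, testing the hypothesis on `B = A` gives
`|∫_A T(y) dμ - ∫_A T(x) dμ| ≤ φ(A) d(x, y)`, so every term of the supremum is at most
`∫_A T(x) dμ`. Hence `ν̂_x` is the indefinite integral of `T(x)`, whose total variation measure has
density `|T(x)|`; part (iv) is then the hypothesis on `B = A` once more.
-/

theorem ENNReal.ofReal_add_ofReal_neg (r : ℝ) :
    ENNReal.ofReal r + ENNReal.ofReal (-r) = ‖r‖ₑ := by
  rcases le_total r 0 with hr | hr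
  · simp [ENNReal.ofReal_eq_zero.2 hr, Real.enorm_eq_ofReal_abs, abs_of_nonpos hr]
  · simp [ENNReal.ofReal_eq_zero.2 (neg_nonpos.2 hr), Real.enorm_of_nonneg hr]

namespace MeasureTheory

variable {Ω : Type*} [MeasurableSpace Ω] {μ : Measure Ω}

theorem SignedMeasure.totalVariation_withDensityᵥ {f : Ω → ℝ} (hf : Integrable f μ) :
    SignedMeasure.totalVariation (μ.withDensityᵥ f) = μ.withDensity fun ω => ‖f ω‖ₑ := by
  obtain ⟨g, hg, hfg⟩ := hf.aemeasurable
  have hjordan := toJordanDecomposition_eq_of_eq_add_withDensity (s := μ.withDensityᵥ f) hg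
    (hf.congr hfg) VectorMeasure.MutuallySingular.zero_left
    (by rw [zero_add]; exact WithDensityᵥEq.congr_ae hfg)
  have hdensity : (μ.withDensity fun ω => ‖f ω‖ₑ) = μ.withDensity fun ω => ‖g ω‖ₑ :=
    withDensity_congr_ae (hfg.fun_comp enorm)
  rw [totalVariation, hjordan, hdensity]
  simp only [toJordanDecomposition_zero, JordanDecomposition.zero_posPart,
    JordanDecomposition.zero_negPart, zero_add]
  rw [← withDensity_add_left hg.ennreal_ofReal]
  exact congrArg _ (funext fun ω => ENNReal.ofReal_add_ofReal_neg (g ω))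

theorem L1.totalVariation_withDensityᵥ_univ (f : Lp ℝ 1 μ) :
    (SignedMeasure.totalVariation (μ.withDensityᵥ f) Set.univ).toReal = ‖f‖ := by
  rw [SignedMeasure.totalVariation_withDensityᵥ (L1.integrable_coeFn f),
    withDensity_apply _ .univ, Measure.restrict_univ, L1.norm_def]

theorem abs_setIntegral_le_iSup_subset {f : Ω → ℝ} (hf : Integrable f μ) {A : Set Ω}
    (hA : MeasurableSet A) :
    |∫ ω in A, f ω ∂μ| ≤
      ⨆ B : {B : Set Ω // MeasurableSet B ∧ B ⊆ A}, |∫ ω in (B : Set Ω), f ω ∂μ| := by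
  refine le_ciSup (f := fun B : {B : Set Ω // MeasurableSet B ∧ B ⊆ A} =>
    |∫ ω in (B : Set Ω), f ω ∂μ|) ⟨∫ ω, |f ω| ∂μ, ?_⟩ ⟨A, hA, subset_rfl⟩
  rintro _ ⟨B, rfl⟩
  exact abs_integral_le_integral_abs.trans
    (setIntegral_le_integral hf.abs (.of_forall fun _ => abs_nonneg _))

end MeasureTheory

theorem ciSup_sub_mul_dist_eq {M : Type*} [PseudoMetricSpace M] {g : M → ℝ} {c : ℝ}
    (hg : ∀ u v, g u - g v ≤ c * dist u v) (w : M) :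
    ⨆ z, (g z - c * dist w z) = g w := by
  have : Nonempty M := ⟨w⟩
  have hle : ∀ z, g z - c * dist w z ≤ g w := fun z => by
    linarith [dist_comm z w ▸ hg z w]
  refine le_antisymm (ciSup_le hle) ?_
  simpa using le_ciSup ⟨g w, Set.forall_mem_range.2 hle⟩ w

theorem phi_lipschitz_representing_measure_L1_general
    {Ω : Type*} [MeasurableSpace Ω] (μ : Measure Ω)
    {M : Type*} [MetricSpace M]
    (φ : Set Ω → ℝ)
    (T : M → Lp ℝ 1 μ)
    (hT : ∀ x y : M, ∀ A : Set Ω, MeasurableSet A →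
      (⨆ B : {B : Set Ω // MeasurableSet B ∧ B ⊆ A},
        |∫ ω in (B : Set Ω), (T x ω - T y ω) ∂μ|) ≤ φ A * dist x y) :
    ∀ x : M,
      (∀ A : Set Ω, MeasurableSet A →
        (⨆ y : M, (∫ ω in A, T y ω ∂μ - φ A * dist x y)) = ∫ ω in A, T x ω ∂μ) ∧
      (∃ ν : SignedMeasure Ω,
        (∀ A : Set Ω, MeasurableSet A →
          ν A = ⨆ y : M, (∫ ω in A, T y ω ∂μ - φ A * dist x y)) ∧
        (∀ A : Set Ω, MeasurableSet A → μ A = 0 → ν A = 0) ∧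
        (⨆ A : {A : Set Ω // MeasurableSet A}, |ν (A : Set Ω)|) =
          ⨆ A : {A : Set Ω // MeasurableSet A}, |∫ ω in (A : Set Ω), T x ω ∂μ| ∧
        (ν.totalVariation Set.univ).toReal = ‖T x‖) ∧
      (∀ y : M, ∀ A : Set Ω, MeasurableSet A →
        |(⨆ z : M, (∫ ω in A, T z ω ∂μ - φ A * dist x z)) -
          (⨆ z : M, (∫ ω in A, T z ω ∂μ - φ A * dist y z))| ≤ φ A * dist x y) := by
  intro x
  have hint : ∀ z, Integrable (fun ω => T z ω) μ := fun z => L1.integrable_coeFn (T z)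
  have hlip : ∀ A, MeasurableSet A → ∀ u v : M,
      |∫ ω in A, T u ω ∂μ - ∫ ω in A, T v ω ∂μ| ≤ φ A * dist u v := fun A hA u v => by
    rw [← integral_sub (hint u).integrableOn (hint v).integrableOn]
    exact (abs_setIntegral_le_iSup_subset ((hint u).sub (hint v)) hA).trans (hT u v A hA)
  have hsup : ∀ w A, MeasurableSet A →
      ⨆ z, (∫ ω in A, T z ω ∂μ - φ A * dist w z) = ∫ ω in A, T w ω ∂μ := fun w A hA =>
    ciSup_sub_mul_dist_eq (fun u v => (le_abs_self _).trans (hlip A hA u v)) w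
  refine ⟨fun A hA => hsup x A hA, ⟨μ.withDensityᵥ fun ω => T x ω, fun A hA => ?_,
    fun A hA hμA => ?_, ?_, L1.totalVariation_withDensityᵥ_univ (T x)⟩, fun y A hA => ?_⟩
  · rw [hsup x A hA, withDensityᵥ_apply (hint x) hA]
  · rw [withDensityᵥ_apply (hint x) hA, setIntegral_measure_zero _ hμA]
  · simp_rw [withDensityᵥ_apply (hint x) (Subtype.prop _)]
  · rw [hsup x A hA, hsup y A hA]
    exact hlip A hA x y

/-- (Proposition `medL1`(2).) Let `μ` be a finite measure, `φ` an increasing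
bounded nonnegative set function, and `T : M → L^1(μ)` a `φ`-Lipschitz map for the
semivariation norm `‖·‖_{L^1(μ),0}`. For `x ∈ M` set
`ν̂_x(A) := sup_{y ∈ M} {∫_A T(y) dμ − φ(A)·d(x,y)}`. Then for every `x`:
(i) `ν̂_x(A) = ∫_A T(x) dμ` for every measurable `A`, so `ν̂_x` is (given by) a countably
additive `μ`-continuous signed measure; (ii) `sup_A |ν̂_x(A)| = sup_A |∫_A T(x) dμ|`;
(iii) the total variation of `ν̂_x` equals `‖T(x)‖_{L^1(μ)}`; and
(iv) `|ν̂_x(A) − ν̂_y(A)| ≤ φ(A)·d(x,y)` for all `x, y ∈ M` and measurable `A`. -/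
theorem phi_lipschitz_representing_measure_L1
    {Ω : Type*} [MeasurableSpace Ω] (μ : Measure Ω) [IsFiniteMeasure μ]
    {M : Type*} [MetricSpace M]
    (φ : Set Ω → ℝ)
    (hφ_nonneg : ∀ A : Set Ω, MeasurableSet A → 0 ≤ φ A)
    (hφ_mono : ∀ A B : Set Ω, MeasurableSet A → MeasurableSet B → B ⊆ A → φ B ≤ φ A)
    (hφ_bdd : ∃ C : ℝ, ∀ A : Set Ω, MeasurableSet A → φ A ≤ C)
    (T : M → Lp ℝ 1 μ)
    (hT : ∀ x y : M, ∀ A : Set Ω, MeasurableSet A →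
      (⨆ B : {B : Set Ω // MeasurableSet B ∧ B ⊆ A},
        |∫ ω in (B : Set Ω), (T x ω - T y ω) ∂μ|) ≤ φ A * dist x y) :
    ∀ x : M,
      (∀ A : Set Ω, MeasurableSet A →
        (⨆ y : M, (∫ ω in A, T y ω ∂μ - φ A * dist x y)) = ∫ ω in A, T x ω ∂μ) ∧
      (∃ ν : SignedMeasure Ω,
        (∀ A : Set Ω, MeasurableSet A →
          ν A = ⨆ y : M, (∫ ω in A, T y ω ∂μ - φ A * dist x y)) ∧
        (∀ A : Set Ω, MeasurableSet A → μ A = 0 → ν A = 0) ∧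
        (⨆ A : {A : Set Ω // MeasurableSet A}, |ν (A : Set Ω)|) =
          ⨆ A : {A : Set Ω // MeasurableSet A}, |∫ ω in (A : Set Ω), T x ω ∂μ| ∧
        (ν.totalVariation Set.univ).toReal = ‖T x‖) ∧
      (∀ y : M, ∀ A : Set Ω, MeasurableSet A →
        |(⨆ z : M, (∫ ω in A, T z ω ∂μ - φ A * dist x z)) -
          (⨆ z : M, (∫ ω in A, T z ω ∂μ - φ A * dist y z))| ≤ φ A * dist x y) :=
  phi_lipschitz_representing_measure_L1_general μ φ T hT
end

section
/- Let (Ω,Σ,μ) be a finite measure space, E₀ and E₁ real normed spaces, and j : E₀ → E₁ an injective continuous linear map. Let φ₀, φ₁ : Σ → (0,∞) be set functions and let T : E₁ → L^1(μ) be a map satisfying: (a) T(j(x₀)) ∈ L^∞(μ) and ‖T(j(x₀))·χ_A‖_{L^∞(μ)} ≤ φ₀(A)·‖x₀‖_{E₀} for every x₀ ∈ E₀ and A ∈ Σ; and (b) ‖(T(x) − T(y))·χ_A‖_{L^1(μ)} ≤ φ₁(A)·‖x − y‖_{E₁} for all x,y ∈ E₁ and A ∈ Σ. Then for every x ∈ E₁,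 every A ∈ Σ and every t > 0: inf { ‖g₀‖_{L^∞(μ)} + t·‖g₁‖_{L^1(μ)} : g₀ ∈ L^∞(μ), g₁ ∈ L^1(μ), T(x)·χ_A = g₀ + g₁ } ≤ φ₀(A) · inf { ‖x₀‖_{E₀} + t·(φ₁(A)/φ₀(A))·‖x₁‖_{E₁} : x₀ ∈ E₀, x₁ ∈ E₁, x = j(x₀) + x₁ }. -/
/-!
Split `x = j x₀ + x₁` and cut `T x · χ_A` into `T (j x₀) · χ_A`, which is small in `L^∞` by (a),
plus `(T x - T (j x₀)) · χ_A`, which is small in `L^1` by (b) since `x - j x₀ = x₁`. This gives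
`K(t, T x · χ_A) ≤ φ₀(A) ‖x₀‖ + t φ₁(A) ‖x₁‖`, and taking the infimum over all splittings of `x`
gives the estimate.
-/

open MeasureTheory
open scoped ENNReal

section KFunctional

variable {Ω : Type*} [MeasurableSpace Ω]

noncomputable def kFunctionalLInftyLOne (μ : Measure Ω) (t : ℝ) (f : Ω → ℝ) : ℝ :=
  sInf {r : ℝ | ∃ g₀ g₁ : Ω → ℝ, MemLp g₀ ∞ μ ∧ MemLp g₁ 1 μ ∧
    (f =ᵐ[μ] fun ω => g₀ ω + g₁ ω) ∧
    r = (eLpNorm g₀ ∞ μ).toReal + t * (eLpNorm g₁ 1 μ).toReal}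

theorem kFunctionalLInftyLOne_le {μ : Measure Ω} {t : ℝ} (ht : 0 ≤ t) {f g₀ g₁ : Ω → ℝ}
    (hg₀ : MemLp g₀ ∞ μ) (hg₁ : MemLp g₁ 1 μ) (hf : f =ᵐ[μ] fun ω => g₀ ω + g₁ ω) :
    kFunctionalLInftyLOne μ t f ≤ (eLpNorm g₀ ∞ μ).toReal + t * (eLpNorm g₁ 1 μ).toReal := by
  refine csInf_le ⟨0, ?_⟩ ⟨g₀, g₁, hg₀, hg₁, hf, rfl⟩
  rintro _ ⟨_, _, _, _, _, rfl⟩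
  positivity

theorem kFunctionalLInftyLOne_indicator_le {μ : Measure Ω} {t : ℝ} (ht : 0 ≤ t)
    {A : Set Ω} (hA : MeasurableSet A) {f u : Ω → ℝ} (hf : MemLp f 1 μ) (hu : MemLp u ∞ μ)
    [IsFiniteMeasure μ] :
    kFunctionalLInftyLOne μ t (A.indicator f) ≤
      (eLpNorm u ∞ (μ.restrict A)).toReal + t * (eLpNorm (f - u) 1 (μ.restrict A)).toReal := by
  have hsplit : A.indicator f = A.indicator u + A.indicator (f - u) := by
    rw [← Set.indicator_add', add_sub_cancel]
  rw [← eLpNorm_indicator_eq_eLpNorm_restrict hA, ← eLpNorm_indicator_eq_eLpNorm_restrict hA]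
  exact kFunctionalLInftyLOne_le ht (hu.indicator hA)
    ((hf.sub (hu.mono_exponent le_top)).indicator hA) (.of_eq hsplit)

variable {E₀ E₁ : Type*} [NormedAddCommGroup E₀] [NormedAddCommGroup E₁]

noncomputable def kFunctional (j : E₀ → E₁) (t : ℝ) (x : E₁) : ℝ :=
  sInf {r : ℝ | ∃ (x₀ : E₀) (x₁ : E₁), x = j x₀ + x₁ ∧ r = ‖x₀‖ + t * ‖x₁‖}

theorem le_mul_kFunctional {j : E₀ → E₁} {t a c : ℝ} {x : E₁} (hc : 0 ≤ c)
    (h : ∀ x₀ x₁, x = j x₀ + x₁ → a ≤ c * (‖x₀‖ + t * ‖x₁‖)) :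
    a ≤ c * kFunctional j t x := by
  rw [kFunctional, ← smul_eq_mul, ← Real.sInf_smul_of_nonneg hc]
  refine le_csInf ⟨_, _, ⟨0, x - j 0, (add_sub_cancel _ _).symm, rfl⟩, rfl⟩ ?_
  rintro _ ⟨_, ⟨x₀, x₁, hx, rfl⟩, rfl⟩
  exact h x₀ x₁ hx

end KFunctional

theorem K_functional_estimate_phi_lipschitz_general
    {Ω : Type*} [MeasurableSpace Ω] (μ : Measure Ω) [IsFiniteMeasure μ]
    {E₀ E₁ : Type*} [NormedAddCommGroup E₀] [NormedSpace ℝ E₀]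
    [NormedAddCommGroup E₁] [NormedSpace ℝ E₁]
    (j : E₀ →L[ℝ] E₁)
    (φ₀ φ₁ : Set Ω → ℝ)
    (hφ₀_pos : ∀ A : Set Ω, MeasurableSet A → 0 < φ₀ A)
    (hφ₁_pos : ∀ A : Set Ω, MeasurableSet A → 0 < φ₁ A)
    (T : E₁ → Lp ℝ 1 μ)
    (ha_mem : ∀ x₀ : E₀, MemLp (⇑(T (j x₀))) ∞ μ)
    (ha : ∀ x₀ : E₀, ∀ A : Set Ω, MeasurableSet A →
      eLpNorm (⇑(T (j x₀))) ∞ (μ.restrict A) ≤ ENNReal.ofReal (φ₀ A * ‖x₀‖))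
    (hb : ∀ x y : E₁, ∀ A : Set Ω, MeasurableSet A →
      eLpNorm (fun ω => T x ω - T y ω) 1 (μ.restrict A) ≤
        ENNReal.ofReal (φ₁ A * ‖x - y‖)) :
    ∀ x : E₁, ∀ A : Set Ω, MeasurableSet A → ∀ t : ℝ, 0 < t →
      sInf {r : ℝ | ∃ g₀ g₁ : Ω → ℝ, MemLp g₀ ∞ μ ∧ MemLp g₁ 1 μ ∧
          (A.indicator (⇑(T x)) =ᵐ[μ] fun ω => g₀ ω + g₁ ω) ∧
          r = (eLpNorm g₀ ∞ μ).toReal + t * (eLpNorm g₁ 1 μ).toReal} ≤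
        φ₀ A * sInf {r : ℝ | ∃ (x₀ : E₀) (x₁ : E₁), x = j x₀ + x₁ ∧
          r = ‖x₀‖ + (t * (φ₁ A / φ₀ A)) * ‖x₁‖} := by
  intro x A hA t ht
  have hφ₀ := hφ₀_pos A hA
  have hφ₁ := hφ₁_pos A hA
  change kFunctionalLInftyLOne μ t (A.indicator (T x)) ≤
    φ₀ A * kFunctional j (t * (φ₁ A / φ₀ A)) x
  refine le_mul_kFunctional hφ₀.le fun x₀ x₁ hx => ?_
  have h₀ : (eLpNorm (T (j x₀)) ∞ (μ.restrict A)).toReal ≤ φ₀ A * ‖x₀‖ :=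
    ENNReal.toReal_le_of_le_ofReal (by positivity) (ha x₀ A hA)
  have h₁ : (eLpNorm (⇑(T x) - ⇑(T (j x₀))) 1 (μ.restrict A)).toReal ≤ φ₁ A * ‖x₁‖ := by
    have hb' := hb x (j x₀) A hA
    rw [sub_eq_of_eq_add' hx] at hb'
    exact ENNReal.toReal_le_of_le_ofReal (by positivity) hb'
  calc kFunctionalLInftyLOne μ t (A.indicator (T x))
      ≤ (eLpNorm (T (j x₀)) ∞ (μ.restrict A)).toReal +
          t * (eLpNorm (⇑(T x) - ⇑(T (j x₀))) 1 (μ.restrict A)).toReal :=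
        kFunctionalLInftyLOne_indicator_le ht.le hA (Lp.memLp (T x)) (ha_mem x₀)
    _ ≤ φ₀ A * ‖x₀‖ + t * (φ₁ A * ‖x₁‖) := by gcongr
    _ = φ₀ A * (‖x₀‖ + t * (φ₁ A / φ₀ A) * ‖x₁‖) := by field_simp

/-- (K-functional estimate for real interpolation of `φ`-Lipschitz maps.)
Let `μ` be a finite measure, `E₀, E₁` normed spaces with an injective continuous linear
embedding `j : E₀ → E₁`, `φ₀, φ₁` positive set functions, and `T : E₁ → L^1(μ)` a map with
(a) `T(j(x₀)) ∈ L^∞(μ)` and `‖T(j(x₀))·χ_A‖_{L^∞} ≤ φ₀(A)·‖x₀‖` for all `x₀ ∈ E₀, A ∈ Σ`;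
(b) `‖(T(x)−T(y))·χ_A‖_{L^1} ≤ φ₁(A)·‖x−y‖` for all `x, y ∈ E₁, A ∈ Σ`. Then for every
`x ∈ E₁`, `A ∈ Σ` and `t > 0`,
`K(t, T(x)·χ_A; L^∞, L^1) ≤ φ₀(A) · K(t·φ₁(A)/φ₀(A), x; E₀, E₁)`, where `K` denotes the
Peetre K-functional. -/
theorem K_functional_estimate_phi_lipschitz
    {Ω : Type*} [MeasurableSpace Ω] (μ : Measure Ω) [IsFiniteMeasure μ]
    {E₀ E₁ : Type*} [NormedAddCommGroup E₀] [NormedSpace ℝ E₀]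
    [NormedAddCommGroup E₁] [NormedSpace ℝ E₁]
    (j : E₀ →L[ℝ] E₁) (hj : Function.Injective j)
    (φ₀ φ₁ : Set Ω → ℝ)
    (hφ₀_pos : ∀ A : Set Ω, MeasurableSet A → 0 < φ₀ A)
    (hφ₁_pos : ∀ A : Set Ω, MeasurableSet A → 0 < φ₁ A)
    (T : E₁ → Lp ℝ 1 μ)
    (ha_mem : ∀ x₀ : E₀, MemLp (⇑(T (j x₀))) ∞ μ)
    (ha : ∀ x₀ : E₀, ∀ A : Set Ω, MeasurableSet A →
      eLpNorm (⇑(T (j x₀))) ∞ (μ.restrict A) ≤ ENNReal.ofReal (φ₀ A * ‖x₀‖))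
    (hb : ∀ x y : E₁, ∀ A : Set Ω, MeasurableSet A →
      eLpNorm (fun ω => T x ω - T y ω) 1 (μ.restrict A) ≤
        ENNReal.ofReal (φ₁ A * ‖x - y‖)) :
    ∀ x : E₁, ∀ A : Set Ω, MeasurableSet A → ∀ t : ℝ, 0 < t →
      sInf {r : ℝ | ∃ g₀ g₁ : Ω → ℝ, MemLp g₀ ∞ μ ∧ MemLp g₁ 1 μ ∧
          (A.indicator (⇑(T x)) =ᵐ[μ] fun ω => g₀ ω + g₁ ω) ∧
          r = (eLpNorm g₀ ∞ μ).toReal + t * (eLpNorm g₁ 1 μ).toReal} ≤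
        φ₀ A * sInf {r : ℝ | ∃ (x₀ : E₀) (x₁ : E₁), x = j x₀ + x₁ ∧
          r = ‖x₀‖ + (t * (φ₁ A / φ₀ A)) * ‖x₁‖} :=
  K_functional_estimate_phi_lipschitz_general μ j φ₀ φ₁ hφ₀_pos hφ₁_pos T ha_mem ha hb
end
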